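/- Let A ∈ ℝ^{m×n}, c, u ∈ ℝ^n with u ≥ 0, and b, b̄ ∈ ℝ^m. If both LP(A,b,c,u) and LP(A,b̄,c,u) are feasible, then |Φ(A,b,c,u) − Φ(A,b̄,c,u)| ≤ κ(X_A)·‖c‖₁·‖b − b̄‖₁. -/

import Mathlib

open BigOperators Finset

noncomputable section

open Classical

/-- A nonzero `g ∈ W` is an elementary vector of `W` if no nonzero `h ∈ W`
has strictly smaller support. -/
def IsElementaryVec {ι : Type*} (W : Submodule ℝ (ι → ℝ)) (g : ι → ℝ) : Prop :=
  g ∈ W ∧ g ≠ 0 ∧ ∀ h : ι → ℝ, h ∈ W → h ≠ 0 → ¬ ({i | h i ≠ 0} ⊂ {i | g i ≠ 0})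

/-- The circuit imbalance measure `κ(W)`: the maximum of `|g j / g i|` over elementary
vectors `g` of `W` and `i, j ∈ supp(g)`, with `κ(W) := 1` for the trivial subspaces. -/
noncomputable def kappaSub {ι : Type*} (W : Submodule ℝ (ι → ℝ)) : ℝ :=
  if W = ⊥ ∨ W = ⊤ then 1
  else sSup {t : ℝ | ∃ g : ι → ℝ, IsElementaryVec W g ∧
    ∃ i j : ι, g i ≠ 0 ∧ g j ≠ 0 ∧ t = |g j / g i|}

/-- `y` conforms to `x` if `x i * y i > 0` whenever `y i ≠ 0`. -/
def Conforms {ι : Type*} (x y : ι → ℝ) : Prop :=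
  ∀ i, y i ≠ 0 → x i * y i > 0

/-- The extended subspace `X_A := ker (A | −I_m) ⊆ ℝ^{n+m}`. -/
noncomputable def XA {m n : ℕ} (A : Matrix (Fin m) (Fin n) ℝ) :
    Submodule ℝ (Fin n ⊕ Fin m → ℝ) :=
  LinearMap.ker (Matrix.fromCols A (-1)).mulVecLin

/-- The optimal value `Φ(A,b,c,u)` of `LP(A,b,c,u)`:
`min ⟨c,x⟩  s.t.  Ax = b, 0 ≤ x ≤ u`. -/
noncomputable def PhiLP {m : ℕ} {ι : Type*} [Fintype ι] (A : Matrix (Fin m) ι ℝ)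
    (b : Fin m → ℝ) (c u : ι → ℝ) : ℝ :=
  sInf {v : ℝ | ∃ x : ι → ℝ, A.mulVec x = b ∧ 0 ≤ x ∧ x ≤ u ∧ v = ∑ i, c i * x i}

/-- `θ(x,π,σ) = Σ_{i : c_i − A_i^⊤π > σ} x_i + Σ_{i : c_i − A_i^⊤π < −σ} (u_i − x_i)`. -/
noncomputable def thetaLP {m n : ℕ} (A : Matrix (Fin m) (Fin n) ℝ) (c u x : Fin n → ℝ)
    (π : Fin m → ℝ) (σ : ℝ) : ℝ :=
  (∑ i ∈ Finset.univ.filter (fun i => c i - ∑ j, A j i * π j > σ), x i) +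
    ∑ i ∈ Finset.univ.filter (fun i => c i - ∑ j, A j i * π j < -σ), (u i - x i)

/-!
Let `z` be feasible for `b` and `xbar` feasible for `bbar`. The vector `(z - xbar, b - bbar)` lies
in `X_A`, so it is a sum of elementary vectors `(p_a, q_a)` of `X_A` conforming to it. Adding to
`xbar` only the `p_a` with `q_a ≠ 0` gives `x` with `A x = b` lying coordinatewise between `xbar`
and `z`, hence in the box. By definition of `κ`, `‖p_a‖_∞ ≤ κ ‖q_a‖₁`, and conformity gives
`∑ ‖q_a‖₁ ≤ ‖b - bbar‖₁`, so `⟨c, x⟩ ≤ ⟨c, xbar⟩ + κ ‖c‖₁ ‖b - bbar‖₁`. Minimizing over `xbar`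
and exchanging `b` and `bbar` gives the claim.
-/

open Function Matrix

section Conformal

variable {ι : Type*}

theorem Conforms.refl (v : ι → ℝ) : Conforms v v := fun _ h => mul_self_pos.mpr h

theorem Conforms.trans {u v w : ι → ℝ} (huv : Conforms u v) (hvw : Conforms v w) :
    Conforms u w := by
  intro i hw
  have hv : v i ≠ 0 := by
    rintro h
    simpa [h] using hvw i hw
  nlinarith [mul_pos (huv i hv) (hvw i hw), mul_self_pos.mpr hv]

theorem Conforms.support_subset {v g : ι → ℝ} (h : Conforms v g) : support g ⊆ support v :=
  fun i hi hv => by simpa [hv] using h i hi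

theorem Conforms.smul {v g : ι → ℝ} (h : Conforms v g) {t : ℝ} (ht : 0 < t) :
    Conforms v (t • g) := by
  intro i hi
  have hg : g i ≠ 0 := right_ne_zero_of_mul hi
  simpa [mul_left_comm] using mul_pos ht (h i hg)

variable {W : Submodule ℝ (ι → ℝ)}

/-- Subtracting the largest multiple `t • g` that keeps the signs of `v` zeroes a coordinate. -/
theorem exists_conforms_sub_smul [Fintype ι] {v g : ι → ℝ} (hsupp : support g ⊆ support v)
    (hpos : ∃ i, 0 < v i * g i) :
    ∃ t : ℝ, 0 < t ∧ Conforms v (v - t • g) ∧ support (v - t • g) ⊂ support v := by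
  set T := Finset.univ.filter fun i => 0 < v i * g i
  obtain ⟨i₀, hi₀, hmin⟩ :=
    T.exists_min_image (fun i => v i / g i) (let ⟨i, hi⟩ := hpos; ⟨i, by simpa [T] using hi⟩)
  have hvg₀ : 0 < v i₀ * g i₀ := by simpa [T] using hi₀
  have hg₀ : g i₀ ≠ 0 := right_ne_zero_of_mul hvg₀.ne'
  have ht : 0 < v i₀ / g i₀ := by
    rw [← mul_div_mul_right _ _ hg₀]; exact div_pos hvg₀ (mul_self_pos.mpr hg₀)
  refine ⟨v i₀ / g i₀, ht, fun i hi => ?_, ?_⟩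
  · have hv : v i ≠ 0 := fun hv => hi (by
      simp [hv, show g i = 0 from not_not.mp fun hg => hsupp hg hv])
    have hnonneg : 0 ≤ v i * (v - (v i₀ / g i₀) • g) i := by
      simp only [Pi.sub_apply, Pi.smul_apply, smul_eq_mul]
      rcases le_or_gt (v i * g i) 0 with hvg | hvg
      · nlinarith [mul_self_nonneg (v i)]
      · have hle : v i₀ / g i₀ ≤ v i / g i := hmin i (by simpa [T] using hvg)
        have hg : g i ≠ 0 := right_ne_zero_of_mul hvg.ne'
        have : v i₀ / g i₀ * (v i * g i) ≤ v i * v i := by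
          calc v i₀ / g i₀ * (v i * g i) ≤ v i / g i * (v i * g i) :=
                mul_le_mul_of_nonneg_right hle hvg.le
            _ = v i * v i := by field_simp
        nlinarith
    exact hnonneg.lt_of_ne (mul_ne_zero hv hi).symm
  · have hsub : support (v - (v i₀ / g i₀) • g) ⊆ support v := by
      intro i hi hv
      exact hi (by simp [hv, show g i = 0 from not_not.mp fun hg => hsupp hg hv])
    refine (Set.ssubset_iff_of_subset hsub).2 ⟨i₀, left_ne_zero_of_mul hvg₀.ne', fun h => h ?_⟩
    simp only [Pi.sub_apply, Pi.smul_apply, smul_eq_mul]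
    field_simp
    ring

theorem IsElementaryVec.smul {g : ι → ℝ} (hg : IsElementaryVec W g) {t : ℝ} (ht : t ≠ 0) :
    IsElementaryVec W (t • g) :=
  ⟨W.smul_mem t hg.1, smul_ne_zero ht hg.2.1, fun h hW h0 hss =>
    hg.2.2 h hW h0 (show support h ⊂ support g by
      rwa [← support_const_smul_of_ne_zero t g ht])⟩

theorem exists_isElementaryVec_conforms [Fintype ι] {v : ι → ℝ} (hv : v ∈ W) (hv0 : v ≠ 0) :
    ∃ g, IsElementaryVec W g ∧ Conforms v g := by
  by_cases hel : IsElementaryVec W v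
  · exact ⟨v, hel, Conforms.refl v⟩
  obtain ⟨h, hW, h0, hss⟩ : ∃ h ∈ W, h ≠ 0 ∧ support h ⊂ support v := by
    simp only [IsElementaryVec, not_and, not_forall, not_not] at hel
    obtain ⟨h, hW, h0, hss⟩ := hel hv hv0
    exact ⟨h, hW, h0, hss⟩
  obtain ⟨f, hfW, hfss, hpos⟩ : ∃ f ∈ W, support f ⊂ support v ∧ ∃ i, 0 < v i * f i := by
    obtain ⟨i, hi⟩ := ne_iff.mp h0
    have hvi : v i ≠ 0 := hss.1 hi
    rcases (mul_ne_zero hvi hi).lt_or_gt with hneg | hpos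
    · exact ⟨-h, W.neg_mem hW, by rwa [support_neg], i, by simpa using hneg⟩
    · exact ⟨h, hW, hss, i, hpos⟩
  obtain ⟨t, ht, hconf, hlt⟩ := exists_conforms_sub_smul hfss.1 hpos
  have hne : v - t • f ≠ 0 := by
    intro heq
    rw [sub_eq_zero.mp heq, support_const_smul_of_ne_zero t f ht.ne'] at hfss
    exact hfss.ne rfl
  obtain ⟨g, hg, hg'⟩ :=
    exists_isElementaryVec_conforms (W.sub_mem hv (W.smul_mem t hfW)) hne
  exact ⟨g, hg, hconf.trans hg'⟩
termination_by (support v).toFinset.card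
decreasing_by exact Finset.card_lt_card (Set.toFinset_ssubset_toFinset.mpr hlt)

theorem exists_conformal_decomposition [Fintype ι] {v : ι → ℝ} (hv : v ∈ W) :
    ∃ (k : ℕ) (g : Fin k → ι → ℝ),
      (∀ a, IsElementaryVec W (g a)) ∧ (∀ a, Conforms v (g a)) ∧ ∑ a, g a = v := by
  by_cases hv0 : v = 0
  · exact ⟨0, Fin.elim0, fun a => a.elim0, fun a => a.elim0, by simp [hv0]⟩
  obtain ⟨g, hg, hconf⟩ := exists_isElementaryVec_conforms hv hv0
  obtain ⟨i, hi⟩ := ne_iff.mp hg.2.1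
  obtain ⟨t, ht, hconf', hlt⟩ := exists_conforms_sub_smul hconf.support_subset ⟨i, hconf i hi⟩
  obtain ⟨k, gs, hels, hconfs, hsum⟩ :=
    exists_conformal_decomposition (W.sub_mem hv (W.smul_mem t hg.1))
  refine ⟨k + 1, Fin.cons (t • g) gs, Fin.cases (hg.smul ht.ne') hels,
    Fin.cases (hconf.smul ht) fun a => hconf'.trans (hconfs a), ?_⟩
  rw [Fin.sum_cons, hsum, add_sub_cancel]
termination_by (support v).toFinset.card
decreasing_by exact Finset.card_lt_card (Set.toFinset_ssubset_toFinset.mpr hlt)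

end Conformal

section SameSign

variable {α : Type*} [Fintype α] {t : α → ℝ} {s : ℝ}

theorem sum_mem_uIcc_of_same_sign (hsign : ∀ a, t a ≠ 0 → 0 < s * t a) (hsum : ∑ a, t a = s)
    (F : Finset α) : ∑ a ∈ F, t a ∈ Set.uIcc 0 s := by
  have hF : ∀ f : α → ℝ, (∀ a, 0 ≤ f a) → 0 ≤ ∑ a ∈ F, f a ∧ ∑ a ∈ F, f a ≤ ∑ a, f a :=
    fun f hf => ⟨Finset.sum_nonneg fun a _ => hf a,
      Finset.sum_le_sum_of_subset_of_nonneg F.subset_univ fun a _ _ => hf a⟩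
  rcases le_or_gt 0 s with hs | hs
  · have ht : ∀ a, 0 ≤ t a := fun a => by
      by_contra! h
      nlinarith [hsign a h.ne]
    obtain ⟨h0, hle⟩ := hF t ht
    exact Set.mem_uIcc.mpr (Or.inl ⟨h0, hsum ▸ hle⟩)
  · have ht : ∀ a, 0 ≤ -t a := fun a => by
      by_contra! h
      nlinarith [hsign a (by linarith)]
    obtain ⟨h0, hle⟩ := hF (-t ·) ht
    simp only [Finset.sum_neg_distrib, hsum] at h0 hle
    exact Set.mem_uIcc.mpr (Or.inr ⟨by linarith, by linarith⟩)

theorem sum_abs_le_abs_of_same_sign (hsign : ∀ a, t a ≠ 0 → 0 < s * t a)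
    (hsum : ∑ a, t a = s) (F : Finset α) : ∑ a ∈ F, |t a| ≤ |s| := by
  have hst : ∀ a, |s| * |t a| = s * t a := fun a => by
    rw [← abs_mul, abs_eq_self]
    by_cases h : t a = 0
    · simp [h]
    · exact (hsign a h).le
  rcases eq_or_ne s 0 with rfl | hs
  · simp [show ∀ a, t a = 0 from fun a => not_not.mp fun h => by simpa using hsign a h]
  have hpos : 0 < |s| := abs_pos.mpr hs
  refine le_of_mul_le_mul_left ?_ hpos
  rw [Finset.mul_sum, Finset.sum_congr rfl fun a _ => hst a, ← Finset.mul_sum]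
  have := sum_mem_uIcc_of_same_sign hsign hsum F
  rw [Set.mem_uIcc] at this
  rcases this with ⟨h0, h1⟩ | ⟨h0, h1⟩
  · rw [abs_of_nonneg (h0.trans h1)]; nlinarith
  · rw [abs_of_nonpos (h0.trans h1)]; nlinarith

end SameSign

section CircuitImbalance

variable {ι : Type*} {W : Submodule ℝ (ι → ℝ)}

theorem IsElementaryVec.eq_smul_of_support_eq {g g' : ι → ℝ} (hg : IsElementaryVec W g)
    (hg' : IsElementaryVec W g') (hsupp : support g = support g') :
    ∃ r : ℝ, r ≠ 0 ∧ g = r • g' := by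
  obtain ⟨i, hi⟩ := ne_iff.mp hg.2.1
  have hi' : g' i ≠ 0 := show i ∈ support g' from hsupp ▸ hi
  refine ⟨g i / g' i, div_ne_zero hi hi', ?_⟩
  by_contra hne
  have hsub : support (g - (g i / g' i) • g') ⊆ support g := by
    intro j hj hgj
    have hg'j : g' j = 0 := not_not.mp fun h => (hsupp ▸ h : j ∈ support g) hgj
    exact hj (by simp [hgj, hg'j])
  refine hg.2.2 _ (W.sub_mem hg.1 (W.smul_mem _ hg'.1)) (sub_ne_zero.mpr hne)
    ((Set.ssubset_iff_of_subset hsub).2 ⟨i, hi, fun h => h ?_⟩)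
  simp only [Pi.sub_apply, Pi.smul_apply, smul_eq_mul]
  field_simp
  ring

/-- The elementary vectors of `W` fall into finitely many classes up to scaling, one per support,
so only finitely many ratios occur. -/
theorem bddAbove_circuit_ratios [Finite ι] :
    BddAbove {t : ℝ | ∃ g : ι → ℝ, IsElementaryVec W g ∧
      ∃ i j : ι, g i ≠ 0 ∧ g j ≠ 0 ∧ t = |g j / g i|} := by
  let rep : Set ι → ι → ℝ := fun s =>
    if h : ∃ g, IsElementaryVec W g ∧ support g = s then h.choose else 0
  refine ((Set.finite_range fun p : Set ι × ι × ι => |rep p.1 p.2.2 / rep p.1 p.2.1|).subset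
    ?_).bddAbove
  rintro t ⟨g, hg, i, j, -, -, rfl⟩
  have hex : ∃ g', IsElementaryVec W g' ∧ support g' = support g := ⟨g, hg, rfl⟩
  obtain ⟨r, hr, hgr⟩ := hg.eq_smul_of_support_eq hex.choose_spec.1 hex.choose_spec.2.symm
  refine ⟨(support g, i, j), ?_⟩
  simp only [rep, dif_pos hex]
  rw [congrFun hgr i, congrFun hgr j, Pi.smul_apply, Pi.smul_apply, smul_eq_mul, smul_eq_mul,
    mul_div_mul_left _ _ hr]

theorem kappaSub_nonneg : 0 ≤ kappaSub W := by
  unfold kappaSub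
  split_ifs
  · exact zero_le_one
  · exact Real.sSup_nonneg fun t ⟨_, _, _, _, _, _, ht⟩ => ht ▸ abs_nonneg _

theorem IsElementaryVec.abs_le_kappaSub_mul [Finite ι] {g : ι → ℝ} (hg : IsElementaryVec W g)
    (i : ι) {j : ι} (hj : g j ≠ 0) : |g i| ≤ kappaSub W * |g j| := by
  by_cases hi : g i = 0
  · rw [hi, abs_zero]
    exact mul_nonneg kappaSub_nonneg (abs_nonneg _)
  have hbot : W ≠ ⊥ := fun h => hg.2.1 (by simpa [h] using hg.1)
  by_cases htop : W = ⊤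
  · -- elementary vectors of the whole space are supported on a single coordinate
    obtain rfl : i = j := by
      by_contra hij
      refine hg.2.2 (Pi.single i (g i)) (htop ▸ Submodule.mem_top) (by simpa using hi)
        ((Set.ssubset_iff_of_subset fun k hk => ?_).2 ⟨j, hj, fun h => ?_⟩)
      · rcases eq_or_ne k i with rfl | hki
        · exact hi
        · simp [Pi.single_apply, hki] at hk
      · simp [Pi.single_apply, Ne.symm hij] at h
    simp [kappaSub, htop]
  have hratio : |g i / g j| ≤ kappaSub W := by
    rw [kappaSub, if_neg (by tauto)]
    exact le_csSup bddAbove_circuit_ratios ⟨g, hg, j, i, hj, hi, rfl⟩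
  calc |g i| = |g i / g j| * |g j| := by rw [← abs_mul, div_mul_cancel₀ _ hj]
    _ ≤ kappaSub W * |g j| := mul_le_mul_of_nonneg_right hratio (abs_nonneg _)

end CircuitImbalance

theorem IsElementaryVec.sum_mul_inl_le {α β : Type*} [Fintype α] [Fintype β]
    {W : Submodule ℝ (α ⊕ β → ℝ)} {g : α ⊕ β → ℝ} (hg : IsElementaryVec W g)
    (hinr : g ∘ Sum.inr ≠ 0) (c : α → ℝ) :
    ∑ i, c i * g (Sum.inl i) ≤ kappaSub W * (∑ i, |c i|) * ∑ j, |g (Sum.inr j)| := by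
  obtain ⟨j, hj⟩ := ne_iff.mp hinr
  have hbound : ∀ i, |g (Sum.inl i)| ≤ kappaSub W * ∑ j, |g (Sum.inr j)| := fun i =>
    (hg.abs_le_kappaSub_mul _ hj).trans <| mul_le_mul_of_nonneg_left
      (Finset.single_le_sum (f := fun j => |g (Sum.inr j)|) (fun _ _ => abs_nonneg _)
        (Finset.mem_univ j)) kappaSub_nonneg
  calc ∑ i, c i * g (Sum.inl i) ≤ ∑ i, |c i| * (kappaSub W * ∑ j, |g (Sum.inr j)|) :=
        Finset.sum_le_sum fun i _ => (le_abs_self _).trans <| (abs_mul _ _).trans_le <|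
          mul_le_mul_of_nonneg_left (hbound i) (abs_nonneg _)
    _ = kappaSub W * (∑ i, |c i|) * ∑ j, |g (Sum.inr j)| := by rw [← Finset.sum_mul]; ring

section LinearProgram

variable {m n : ℕ} (A : Matrix (Fin m) (Fin n) ℝ)

theorem mem_XA_iff (v : Fin n ⊕ Fin m → ℝ) : v ∈ XA A ↔ A *ᵥ (v ∘ Sum.inl) = v ∘ Sum.inr := by
  rw [XA, LinearMap.mem_ker, Matrix.mulVecLin_apply, Matrix.fromCols_mulVec, Matrix.neg_mulVec,
    Matrix.one_mulVec, add_neg_eq_zero]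

theorem neg_sum_abs_mul_le_cost (c : Fin n → ℝ) {u x : Fin n → ℝ} (hx0 : 0 ≤ x) (hxu : x ≤ u) :
    -∑ i, |c i| * u i ≤ ∑ i, c i * x i := by
  rw [← Finset.sum_neg_distrib]
  refine Finset.sum_le_sum fun i _ => ?_
  have h1 := mul_le_mul_of_nonneg_left (hxu i) (abs_nonneg (c i))
  have h2 := mul_le_mul_of_nonneg_right (neg_abs_le (c i)) (hx0 i)
  linarith

theorem exists_feasible_cost_le {c u z xbar : Fin n → ℝ} {b bbar : Fin m → ℝ}
    (hz : A *ᵥ z = b) (hz0 : 0 ≤ z) (hzu : z ≤ u)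
    (hx : A *ᵥ xbar = bbar) (hx0 : 0 ≤ xbar) (hxu : xbar ≤ u) :
    ∃ x, A *ᵥ x = b ∧ 0 ≤ x ∧ x ≤ u ∧
      ∑ i, c i * x i ≤ ∑ i, c i * xbar i +
        kappaSub (XA A) * (∑ i, |c i|) * ∑ j, |b j - bbar j| := by
  set V : Fin n ⊕ Fin m → ℝ := Sum.elim (z - xbar) (b - bbar)
  have hV : V ∈ XA A := by
    rw [mem_XA_iff]
    simp [V, Matrix.mulVec_sub, hz, hx]
  obtain ⟨k, g, hel, hconf, hsum⟩ := exists_conformal_decomposition hV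
  have hsum_inl (i : Fin n) : ∑ a, g a (Sum.inl i) = z i - xbar i := by
    simpa [V] using congrFun hsum (Sum.inl i)
  have hsum_inr (j : Fin m) : ∑ a, g a (Sum.inr j) = b j - bbar j := by
    simpa [V] using congrFun hsum (Sum.inr j)
  set F := Finset.univ.filter fun a => g a ∘ Sum.inr ≠ 0
  refine ⟨xbar + ∑ a ∈ F, g a ∘ Sum.inl, ?_, ?_⟩
  · rw [Matrix.mulVec_add, Matrix.mulVec_sum, hx]
    simp_rw [fun a => (mem_XA_iff A (g a)).mp (hel a).1, F, Finset.sum_filter_ne_zero]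
    ext j
    simp [Finset.sum_apply, hsum_inr]
  have hbetween (i : Fin n) :
      (xbar + ∑ a ∈ F, g a ∘ Sum.inl) i ∈ Set.uIcc (xbar i) (z i) := by
    have := sum_mem_uIcc_of_same_sign (fun a => by simpa [V] using hconf a (Sum.inl i))
      (hsum_inl i) F
    have := Set.mem_image_of_mem (xbar i + ·) this
    rw [Set.image_const_add_uIcc, add_zero, add_sub_cancel] at this
    simpa [Finset.sum_apply] using this
  have hbox (i : Fin n) := Set.uIcc_subset_Icc ⟨hx0 i, hxu i⟩ ⟨hz0 i, hzu i⟩ (hbetween i)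
  refine ⟨fun i => (hbox i).1, fun i => (hbox i).2, ?_⟩
  have hinr (j : Fin m) : ∑ a ∈ F, |g a (Sum.inr j)| ≤ |b j - bbar j| :=
    sum_abs_le_abs_of_same_sign (fun a => by simpa [V] using hconf a (Sum.inr j)) (hsum_inr j) F
  calc c ⬝ᵥ (xbar + ∑ a ∈ F, g a ∘ Sum.inl)
      = c ⬝ᵥ xbar + ∑ a ∈ F, ∑ i, c i * g a (Sum.inl i) := by
        rw [dotProduct_add, dotProduct_sum]; rfl
    _ ≤ c ⬝ᵥ xbar + ∑ a ∈ F,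
          kappaSub (XA A) * (∑ i, |c i|) * ∑ j, |g a (Sum.inr j)| := by
        gcongr with a ha
        exact (hel a).sum_mul_inl_le (Finset.mem_filter.mp ha).2 c
    _ ≤ c ⬝ᵥ xbar + kappaSub (XA A) * (∑ i, |c i|) * ∑ j, |b j - bbar j| := by
        rw [← Finset.mul_sum, Finset.sum_comm]
        have : 0 ≤ kappaSub (XA A) * ∑ i, |c i| :=
          mul_nonneg kappaSub_nonneg (Finset.sum_nonneg fun i _ => abs_nonneg _)
        gcongr with j
        exact hinr j

theorem PhiLP_le_add (c u : Fin n → ℝ) {b bbar : Fin m → ℝ}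
    (hb : ∃ x : Fin n → ℝ, A *ᵥ x = b ∧ 0 ≤ x ∧ x ≤ u)
    (hbbar : ∃ x : Fin n → ℝ, A *ᵥ x = bbar ∧ 0 ≤ x ∧ x ≤ u) :
    PhiLP A b c u ≤ PhiLP A bbar c u + kappaSub (XA A) * (∑ i, |c i|) * ∑ j, |b j - bbar j| := by
  obtain ⟨z, hz, hz0, hzu⟩ := hb
  obtain ⟨x₀, hx₀, hx₀0, hx₀u⟩ := hbbar
  rw [← sub_le_iff_le_add]
  refine le_csInf ⟨_, x₀, hx₀, hx₀0, hx₀u, rfl⟩ ?_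
  rintro _ ⟨x, hx, hx0, hxu, rfl⟩
  obtain ⟨x', hx', hx'0, hx'u, hcost⟩ := exists_feasible_cost_le A hz hz0 hzu hx hx0 hxu (c := c)
  have hbdd : BddBelow {v : ℝ | ∃ x : Fin n → ℝ, A *ᵥ x = b ∧ 0 ≤ x ∧ x ≤ u ∧
      v = ∑ i, c i * x i} :=
    ⟨_, by rintro _ ⟨x, -, hx0, hxu, rfl⟩; exact neg_sum_abs_mul_le_cost c hx0 hxu⟩
  exact sub_le_iff_le_add.mpr ((csInf_le hbdd ⟨x', hx', hx'0, hx'u, rfl⟩).trans hcost)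

end LinearProgram

theorem optimal_value_rhs_proximity_general {m n : ℕ} (A : Matrix (Fin m) (Fin n) ℝ)
    (c u : Fin n → ℝ) (b bbar : Fin m → ℝ)
    (hb : ∃ x : Fin n → ℝ, A.mulVec x = b ∧ 0 ≤ x ∧ x ≤ u)
    (hbbar : ∃ x : Fin n → ℝ, A.mulVec x = bbar ∧ 0 ≤ x ∧ x ≤ u) :
    |PhiLP A b c u - PhiLP A bbar c u| ≤
      kappaSub (XA A) * (∑ i, |c i|) * ∑ j, |b j - bbar j| := by
  have hsymm : ∑ j, |bbar j - b j| = ∑ j, |b j - bbar j| :=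
    Finset.sum_congr rfl fun j _ => abs_sub_comm _ _
  rw [abs_sub_le_iff]
  have h₁ := PhiLP_le_add A c u hb hbbar
  have h₂ := PhiLP_le_add A c u hbbar hb
  rw [hsymm] at h₂
  constructor <;> linarith

/-- If both `LP(A,b,c,u)` and `LP(A,b̄,c,u)` are feasible, then
`|Φ(A,b,c,u) − Φ(A,b̄,c,u)| ≤ κ(X_A)·‖c‖₁·‖b − b̄‖₁`. -/
theorem optimal_value_rhs_proximity {m n : ℕ} (A : Matrix (Fin m) (Fin n) ℝ)
    (c u : Fin n → ℝ) (hu : 0 ≤ u) (b bbar : Fin m → ℝ)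
    (hb : ∃ x : Fin n → ℝ, A.mulVec x = b ∧ 0 ≤ x ∧ x ≤ u)
    (hbbar : ∃ x : Fin n → ℝ, A.mulVec x = bbar ∧ 0 ≤ x ∧ x ≤ u) :
    |PhiLP A b c u - PhiLP A bbar c u| ≤
      kappaSub (XA A) * (∑ i, |c i|) * ∑ j, |b j - bbar j| :=
  optimal_value_rhs_proximity_general A c u b bbar hb hbbar
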